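/- arXiv:1612.09259 — 6 statements merged into one kernel-verified Lean document; each statement's English description precedes it below -/
import Mathlib

section
/- Let n be a positive integer, let σ : ℕ → ℝ be nonnegative and antitone on {1,…,n} (i.e., σ(1) ≥ σ(2) ≥ … ≥ σ(n) ≥ 0) with ∑_{i=1}^n σ(i) ≤ m for a real number m ≥ 0, and let p : ℕ → ℕ satisfy p(i) ≤ i for every i ∈ {1,…,n} and ∑_{i=1}^n p(i) ≤ P for a natural number P. Then ∑_{i=1}^n σ(i)·p(i) ≤ m·(2·√P + 1). (This is the extremal combinatorial inequality underlying the theorem that the fast triangle-counting algorithm runs in O(TriEnum + m·√τ) time: σ(i) is the number of temporal edges on the i-th node pair and p(i) is the number of times that pair's edges are processed.) -/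
/-!
Split the indices at a threshold `t`. For `i ≤ t`, `p i ≤ i ≤ t`, so pair `i` contributes at
most `t * σ i`. For `i > t`, antitonicity gives `i * σ i ≤ σ 1 + ⋯ + σ i ≤ m`, so `σ i ≤ m / t`
and pair `i` contributes at most `m * p i / t`. Summing, the total is at most
`t * m + m * P / t`, and `t = √P + 1` gives `m * (2 * √P + 1)`.
-/

open Finset

theorem mul_le_sum_Icc_of_antitoneOn {σ : ℕ → ℝ} {n i : ℕ} (hσ0 : ∀ j ∈ Icc 1 n, 0 ≤ σ j)
    (hσ : AntitoneOn σ (Set.Icc 1 n)) (hi : i ∈ Icc 1 n) :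
    i * σ i ≤ ∑ j ∈ Icc 1 n, σ j := by
  obtain ⟨hi1, hin⟩ := mem_Icc.mp hi
  calc (i : ℝ) * σ i = ∑ _j ∈ Icc 1 i, σ i := by simp
    _ ≤ ∑ j ∈ Icc 1 i, σ j := sum_le_sum fun j hj =>
        hσ ⟨(mem_Icc.mp hj).1, (mem_Icc.mp hj).2.trans hin⟩ ⟨hi1, hin⟩ (mem_Icc.mp hj).2
    _ ≤ ∑ j ∈ Icc 1 n, σ j :=
        sum_le_sum_of_subset_of_nonneg (Icc_subset_Icc_right hin) fun j hj _ => hσ0 j hj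

theorem mul_le_mul_add_mul_div_of_mul_le {s q x m t : ℝ} (ht : 0 < t) (hs : 0 ≤ s)
    (hq : 0 ≤ q) (hqx : q ≤ x) (hxs : x * s ≤ m) : s * q ≤ t * s + m * q / t := by
  rcases le_or_gt x t with hxt | htx
  · have hm : 0 ≤ m := by nlinarith
    have : 0 ≤ m * q / t := by positivity
    nlinarith
  · have : s * q ≤ m * q / t := by
      have hst : t * s ≤ m := by nlinarith
      rw [le_div_iff₀ ht]
      nlinarith [mul_le_mul_of_nonneg_right hst hq]
    nlinarith

theorem sum_Icc_mul_le_of_antitoneOn {n : ℕ} {σ p : ℕ → ℝ} {m P t : ℝ} (ht : 0 < t)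
    (hσ0 : ∀ i ∈ Icc 1 n, 0 ≤ σ i) (hσ : AntitoneOn σ (Set.Icc 1 n))
    (hσm : ∑ i ∈ Icc 1 n, σ i ≤ m) (hp0 : ∀ i ∈ Icc 1 n, 0 ≤ p i)
    (hp : ∀ i ∈ Icc 1 n, p i ≤ i) (hP : ∑ i ∈ Icc 1 n, p i ≤ P) :
    ∑ i ∈ Icc 1 n, σ i * p i ≤ t * m + m * (P / t) := by
  have hm : 0 ≤ m := (sum_nonneg hσ0).trans hσm
  calc ∑ i ∈ Icc 1 n, σ i * p i ≤ ∑ i ∈ Icc 1 n, (t * σ i + m * p i / t) :=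
        sum_le_sum fun i hi => mul_le_mul_add_mul_div_of_mul_le ht (hσ0 i hi) (hp0 i hi)
          (hp i hi) ((mul_le_sum_Icc_of_antitoneOn hσ0 hσ hi).trans hσm)
    _ = t * ∑ i ∈ Icc 1 n, σ i + m * ((∑ i ∈ Icc 1 n, p i) / t) := by
        rw [sum_add_distrib, mul_sum, sum_div, mul_sum]
        simp only [mul_div_assoc]
    _ ≤ t * m + m * (P / t) := by gcongr

theorem div_sqrt_add_one_le_sqrt {x : ℝ} (hx : 0 ≤ x) : x / (√x + 1) ≤ √x := by
  rw [div_le_iff₀ (by positivity)]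
  nlinarith [Real.mul_self_sqrt hx, Real.sqrt_nonneg x]

theorem sum_sigma_mul_p_le_general (n : ℕ) (σ : ℕ → ℝ) (m : ℝ) (hm : 0 ≤ m)
    (hσ0 : ∀ i ∈ Finset.Icc 1 n, 0 ≤ σ i)
    (hσa : ∀ i j, 1 ≤ i → i ≤ j → j ≤ n → σ j ≤ σ i)
    (hσm : ∑ i ∈ Finset.Icc 1 n, σ i ≤ m)
    (p : ℕ → ℕ) (P : ℕ)
    (hp : ∀ i ∈ Finset.Icc 1 n, p i ≤ i)
    (hP : ∑ i ∈ Finset.Icc 1 n, p i ≤ P) :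
    ∑ i ∈ Finset.Icc 1 n, σ i * p i ≤ m * (2 * Real.sqrt P + 1) := by
  have hσ : AntitoneOn σ (Set.Icc 1 n) := fun i hi j hj hij => hσa i j hi.1 hij hj.2
  have hPR : ∑ i ∈ Icc 1 n, (p i : ℝ) ≤ P := by exact_mod_cast hP
  calc ∑ i ∈ Icc 1 n, σ i * p i ≤ (√P + 1) * m + m * (P / (√P + 1)) :=
        sum_Icc_mul_le_of_antitoneOn (by positivity) hσ0 hσ hσm (fun i _ => Nat.cast_nonneg _)
          (fun i hi => by exact_mod_cast hp i hi) hPR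
    _ ≤ (√P + 1) * m + m * √P := by gcongr; exact div_sqrt_add_one_le_sqrt P.cast_nonneg
    _ = m * (2 * √P + 1) := by ring

/-- The extremal combinatorial inequality underlying the `O(TriEnum + m·√τ)` running-time
theorem for the fast temporal triangle counting algorithm: if `σ` is a nonnegative antitone
sequence on `{1,…,n}` with total at most `m`, and `p i ≤ i` with `∑ p i ≤ P`, then
`∑ σ i * p i ≤ m * (2√P + 1)`. -/
theorem sum_sigma_mul_p_le (n : ℕ) (hn : 0 < n) (σ : ℕ → ℝ) (m : ℝ) (hm : 0 ≤ m)
    (hσ0 : ∀ i ∈ Finset.Icc 1 n, 0 ≤ σ i)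
    (hσa : ∀ i j, 1 ≤ i → i ≤ j → j ≤ n → σ j ≤ σ i)
    (hσm : ∑ i ∈ Finset.Icc 1 n, σ i ≤ m)
    (p : ℕ → ℕ) (P : ℕ)
    (hp : ∀ i ∈ Finset.Icc 1 n, p i ≤ i)
    (hP : ∑ i ∈ Finset.Icc 1 n, p i ≤ P) :
    ∑ i ∈ Finset.Icc 1 n, σ i * p i ≤ m * (2 * Real.sqrt P + 1) :=
  sum_sigma_mul_p_le_general n σ m hm hσ0 hσa hσm p P hp hP
end

section
/- Let n be a positive integer and let p : ℕ → ℕ satisfy p(i) ≤ i for every i ∈ {1,…,n} and ∑_{i=1}^n p(i) ≤ P for a natural number P. Then ∑_{i=1}^n p(i)/i ≤ 2·√P + 1 (where the sum is taken in the real numbers). -/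
/-- If `p i ≤ i` on `{1,…,n}` and `∑ p i ≤ P`, then `∑ p i / i ≤ 2√P + 1`. -/
theorem sum_p_div_le (n : ℕ) (hn : 0 < n) (p : ℕ → ℕ) (P : ℕ)
    (hp : ∀ i ∈ Finset.Icc 1 n, p i ≤ i)
    (hP : ∑ i ∈ Finset.Icc 1 n, p i ≤ P) :
    ∑ i ∈ Finset.Icc 1 n, (p i : ℝ) / i ≤ 2 * Real.sqrt P + 1 := by
  classical
  set t : ℕ := Nat.sqrt P + 1 with ht
  have htpos : (0:ℝ) < (t:ℝ) := by positivity
  have hsqP : (0:ℝ) ≤ Real.sqrt P := Real.sqrt_nonneg _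
  have hnat_le : (Nat.sqrt P : ℝ) ≤ Real.sqrt P := Real.nat_sqrt_le_real_sqrt
  have hsqrt_le_t : Real.sqrt P ≤ (t:ℝ) := by
    have hPt : (P:ℝ) ≤ (t:ℝ)^2 := by
      have h : P ≤ t * t := by
        simpa [ht, Nat.succ_eq_add_one] using Nat.le_of_lt (Nat.lt_succ_sqrt P)
      have h' := (Nat.cast_le (α := ℝ)).mpr h
      push_cast at h'
      have htc : (t:ℝ) = (Nat.sqrt P : ℝ) + 1 := by push_cast [ht]; ring
      nlinarith [h', htc]
    calc Real.sqrt P ≤ Real.sqrt ((t:ℝ)^2) := Real.sqrt_le_sqrt hPt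
      _ = (t:ℝ) := Real.sqrt_sq (le_of_lt htpos)
  have ht_le : (t:ℝ) ≤ Real.sqrt P + 1 := by
    have : (t:ℝ) = (Nat.sqrt P : ℝ) + 1 := by push_cast [ht]; ring
    linarith
  -- split the sum
  rw [← Finset.sum_filter_add_sum_filter_not (Finset.Icc 1 n) (fun i => i ≤ t)
    (fun i => (p i : ℝ)/i)]
  have h1 : ∑ i ∈ (Finset.Icc 1 n).filter (fun i => i ≤ t), (p i : ℝ)/i ≤ (t:ℝ) := by
    calc ∑ i ∈ (Finset.Icc 1 n).filter (fun i => i ≤ t), (p i : ℝ)/i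
        ≤ ∑ i ∈ (Finset.Icc 1 n).filter (fun i => i ≤ t), (1:ℝ) := by
          apply Finset.sum_le_sum
          intro i hi
          simp only [Finset.mem_filter, Finset.mem_Icc] at hi
          have hipos : (0:ℝ) < (i:ℝ) := by
            have : 1 ≤ i := hi.1.1
            exact_mod_cast this
          rw [div_le_one hipos]
          exact_mod_cast hp i (Finset.mem_Icc.mpr hi.1)
      _ = ((Finset.Icc 1 n).filter (fun i => i ≤ t)).card := by
          simp
      _ ≤ (t:ℝ) := by
          have hsub : (Finset.Icc 1 n).filter (fun i => i ≤ t) ⊆ Finset.Icc 1 t := by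
            intro i hi
            simp only [Finset.mem_filter, Finset.mem_Icc] at hi ⊢
            exact ⟨hi.1.1, hi.2⟩
          have := Finset.card_le_card hsub
          have hcard : (Finset.Icc 1 t).card = t := by simp
          exact_mod_cast hcard ▸ this
  have h2 : ∑ i ∈ (Finset.Icc 1 n).filter (fun i => ¬ i ≤ t), (p i : ℝ)/i
      ≤ Real.sqrt P := by
    calc ∑ i ∈ (Finset.Icc 1 n).filter (fun i => ¬ i ≤ t), (p i : ℝ)/i
        ≤ ∑ i ∈ (Finset.Icc 1 n).filter (fun i => ¬ i ≤ t), (p i : ℝ)/(t:ℝ) := by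
          apply Finset.sum_le_sum
          intro i hi
          simp only [Finset.mem_filter, not_le] at hi
          have : (t:ℝ) ≤ (i:ℝ) := by exact_mod_cast le_of_lt hi.2
          exact div_le_div_of_nonneg_left (by positivity) htpos this
      _ = (∑ i ∈ (Finset.Icc 1 n).filter (fun i => ¬ i ≤ t), (p i : ℝ)) / (t:ℝ) := by
          rw [Finset.sum_div]
      _ ≤ (P:ℝ) / (t:ℝ) := by
          gcongr
          calc ∑ i ∈ (Finset.Icc 1 n).filter (fun i => ¬ i ≤ t), (p i : ℝ)
              ≤ ∑ i ∈ Finset.Icc 1 n, (p i : ℝ) := by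
                apply Finset.sum_le_sum_of_subset_of_nonneg (Finset.filter_subset _ _)
                intro i _ _; positivity
            _ ≤ (P:ℝ) := by exact_mod_cast hP
      _ ≤ Real.sqrt P := by
          rw [div_le_iff₀ htpos]
          have := Real.mul_self_sqrt (show (0:ℝ) ≤ (P:ℝ) by positivity)
          nlinarith [hsqrt_le_t]
  linarith
end

section
/- Let j be a positive integer, m ≥ 0 a real number, and set P = j(j+1)/2. Define σ(i) = m/j for 1 ≤ i ≤ j and p(i) = i for 1 ≤ i ≤ j. Then σ is nonnegative and antitone on {1,…,j} with ∑_{i=1}^j σ(i) = m; p satisfies p(i) ≤ i and ∑_{i=1}^j p(i) = P; and ∑_{i=1}^j σ(i)·p(i) = m(j+1)/2 ≥ (m/2)·√(2P). Hence the upper bound of order m·√P on ∑ σ(i)·p(i) is attained up to a constant factor. -/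
open Finset

theorem Finset.sum_Icc_one_id_mul_two (n : ℕ) : (∑ i ∈ Icc 1 n, i) * 2 = n * (n + 1) := by
  induction n with
  | zero => simp
  | succ n ih =>
    rw [sum_Icc_succ_top (by omega), add_mul, ih]
    ring

theorem Finset.sum_Icc_one_id (n : ℕ) : ∑ i ∈ Icc 1 n, i = n * (n + 1) / 2 := by
  rw [← sum_Icc_one_id_mul_two, Nat.mul_div_cancel _ two_pos]

theorem Real.sqrt_mul_add_one_le {x : ℝ} (hx : 0 ≤ x) : √(x * (x + 1)) ≤ x + 1 :=
  (Real.sqrt_le_left (by positivity)).mpr (by nlinarith)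

/-- Tightness of the `O(m√P)` bound: with `P = j(j+1)/2`, `σ i = m/j` and `p i = i` on
`{1,…,j}`, the sequence `σ` is nonnegative antitone with sum `m`, `p` satisfies `p i ≤ i`
with sum `P`, while `∑ σ i * p i = m(j+1)/2 ≥ (m/2)·√(2P)`. -/
theorem tightness_example (j : ℕ) (hj : 0 < j) (m : ℝ) (hm : 0 ≤ m) (P : ℕ)
    (hPdef : P = j * (j + 1) / 2)
    (σ : ℕ → ℝ) (hσdef : ∀ i ∈ Finset.Icc 1 j, σ i = m / j)
    (p : ℕ → ℕ) (hpdef : ∀ i ∈ Finset.Icc 1 j, p i = i) :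
    (∀ i ∈ Finset.Icc 1 j, 0 ≤ σ i) ∧
    (∀ i i', 1 ≤ i → i ≤ i' → i' ≤ j → σ i' ≤ σ i) ∧
    (∑ i ∈ Finset.Icc 1 j, σ i = m) ∧
    (∀ i ∈ Finset.Icc 1 j, p i ≤ i) ∧
    (∑ i ∈ Finset.Icc 1 j, p i = P) ∧
    (∑ i ∈ Finset.Icc 1 j, σ i * p i = m * (j + 1) / 2) ∧
    m * (j + 1) / 2 ≥ (m / 2) * Real.sqrt (2 * P) := by
  have hj₀ : (j : ℝ) ≠ 0 := by positivity
  have hP : ∑ i ∈ Icc 1 j, i = P := hPdef ▸ sum_Icc_one_id j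
  have h2P : (2 * P : ℝ) = j * (j + 1) := by
    rw [← hP, mul_comm]
    exact_mod_cast sum_Icc_one_id_mul_two j
  refine ⟨fun i hi => by rw [hσdef i hi]; positivity, fun i i' h₁ h₂ h₃ => ?_, ?_,
    fun i hi => (hpdef i hi).le, (sum_congr rfl hpdef).trans hP, ?_, ?_⟩
  · rw [hσdef i (mem_Icc.mpr ⟨h₁, h₂.trans h₃⟩), hσdef i' (mem_Icc.mpr ⟨h₁.trans h₂, h₃⟩)]
  · rw [sum_congr rfl hσdef, sum_const, Nat.card_Icc, nsmul_eq_mul, Nat.add_sub_cancel]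
    field_simp
  · calc ∑ i ∈ Icc 1 j, σ i * p i = m / j * ∑ i ∈ Icc 1 j, (i : ℝ) := by
          rw [mul_sum]
          exact sum_congr rfl fun i hi => by rw [hσdef i hi, hpdef i hi]
      _ = m / j * (2 * P) / 2 := by rw [← Nat.cast_sum, hP]; ring
      _ = m * (j + 1) / 2 := by rw [h2P]; field_simp
  · calc m / 2 * √(2 * P) = m / 2 * √(j * (j + 1)) := by rw [h2P]
      _ ≤ m / 2 * (j + 1) := by gcongr; exact Real.sqrt_mul_add_one_le j.cast_nonneg
      _ = m * (j + 1) / 2 := by ring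
end

section
/- Let α be a type with decidable equality, let s, w be lists over α, and let a, b ∈ α. Then the number of occurrences (counted with multiplicity) of the list w ++ [b] among the sublists of s ++ [a] equals the number of occurrences of w ++ [b] among the sublists of s, plus (if b = a) the number of occurrences of w among the sublists of s. Here the sublists of a list s are all subsequences of s, enumerated with multiplicity (one for each set of positions realizing the subsequence). -/
/-- Appending an element `a` to a list `s`: the multiplicity of the pattern `w ++ [b]`
among the sublists (subsequences, counted with multiplicity) of `s ++ [a]` equals its
multiplicity among sublists of `s`, plus (if `b = a`) the multiplicity of `w` among the
sublists of `s`. This is the dynamic-programming recurrence behind the general temporal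
motif counting algorithm. -/
theorem count_sublists_append (α : Type*) [DecidableEq α] (s w : List α) (a b : α) :
    ((s ++ [a]).sublists.count (w ++ [b])) =
      s.sublists.count (w ++ [b]) + if b = a then s.sublists.count w else 0 := by
  rw [List.sublists_concat, List.count_append]
  congr 1
  by_cases h : b = a
  · subst h
    rw [if_pos rfl]
    simp only [List.count, List.countP_map]
    refine List.countP_congr fun x _ => ?_
    simp [Function.comp, beq_iff_eq]
  · rw [if_neg h, List.count_eq_zero]
    simp only [List.mem_map, not_exists, not_and]
    intro x _ hx
    apply h
    have := congrArg (fun l => l.getLast?) hx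
    simpa using this.symm
end

section
/- Let n and m be natural numbers with m ≥ 2n, and let u, v, w_1, …, w_n be pairwise distinct vertices. Define a sequence of m directed edges e_1, …, e_m by e_{2i−1} = (w_i, u) and e_{2i} = (w_i, v) for 1 ≤ i ≤ n, and e_j = (u, v) for 2n < j ≤ m. Then the number of index triples (a, b, c) with a < b < c such that there exists a vertex x with e_a = (x, u), e_b = (x, v), and e_c = (u, v) is exactly n·(m − 2n). -/
/-- Worst-case construction for the baseline triangle motif counting algorithm: with
edges `e (2i-1) = (wᵢ, u)`, `e (2i) = (wᵢ, v)` for `1 ≤ i ≤ n` and `e j = (u, v)` for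
`2n < j ≤ m`, the number of increasing index triples `(a, b, c)` forming an instance of
the triangle motif `(x,u), (x,v), (u,v)` is exactly `n * (m - 2n)`. -/
theorem worst_case_triangle_motif_count {α : Type*} (n m : ℕ) (hm : 2 * n ≤ m)
    (u v : α) (w : ℕ → α) (huv : u ≠ v)
    (hw : Set.InjOn w (Set.Icc 1 n))
    (hwuv : ∀ i, 1 ≤ i → i ≤ n → w i ≠ u ∧ w i ≠ v)
    (e : ℕ → α × α)
    (he1 : ∀ i, 1 ≤ i → i ≤ n → e (2 * i - 1) = (w i, u) ∧ e (2 * i) = (w i, v))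
    (he2 : ∀ j, 2 * n < j → j ≤ m → e j = (u, v)) :
    Set.ncard {q : ℕ × ℕ × ℕ | 1 ≤ q.1 ∧ q.1 < q.2.1 ∧ q.2.1 < q.2.2 ∧ q.2.2 ≤ m ∧
        ∃ x, e q.1 = (x, u) ∧ e q.2.1 = (x, v) ∧ e q.2.2 = (u, v)} =
      n * (m - 2 * n) := by
  have hset : {q : ℕ × ℕ × ℕ | 1 ≤ q.1 ∧ q.1 < q.2.1 ∧ q.2.1 < q.2.2 ∧ q.2.2 ≤ m ∧
        ∃ x, e q.1 = (x, u) ∧ e q.2.1 = (x, v) ∧ e q.2.2 = (u, v)} =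
      ↑((Finset.Icc 1 n ×ˢ Finset.Ioc (2 * n) m).image
        fun p => (2 * p.1 - 1, 2 * p.1, p.2)) := by
    ext ⟨a, b, c⟩
    simp only [Finset.coe_image, Set.mem_image, Finset.mem_coe, Finset.mem_product,
      Finset.mem_Icc, Finset.mem_Ioc, Set.mem_setOf_eq, Prod.exists]
    constructor
    · rintro ⟨ha1, hab, hbc, hcm, x, hea, heb, hec⟩
      have ham : a ≤ m := by omega
      have hbm : b ≤ m := by omega
      -- a ≤ 2n
      have ha2n : a ≤ 2 * n := by
        by_contra h
        push_neg at h
        have h2 := he2 a h ham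
        rw [hea] at h2
        exact absurd (congrArg Prod.snd h2) huv
      -- a is odd, a = 2i - 1
      obtain ⟨k, hk⟩ | ⟨k, hk⟩ := Nat.even_or_odd a
      · -- even: contradiction
        have hk1 : 1 ≤ k := by omega
        have hkn : k ≤ n := by omega
        have h2 := (he1 k hk1 hkn).2
        have : a = 2 * k := by omega
        rw [← this, hea] at h2
        exact absurd (congrArg Prod.snd h2) huv
      · set i := k + 1 with hi
        have hi1 : 1 ≤ i := by omega
        have hin : i ≤ n := by omega
        have hai : a = 2 * i - 1 := by omega
        have h1 := (he1 i hi1 hin).1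
        rw [← hai, hea] at h1
        have hx : x = w i := congrArg Prod.fst h1
        -- b ≤ 2n
        have hb2n : b ≤ 2 * n := by
          by_contra h
          push_neg at h
          have h2 := he2 b h hbm
          rw [heb] at h2
          have : x = u := congrArg Prod.fst h2
          exact (hwuv i hi1 hin).1 (hx.symm.trans this)
        -- b = 2 * i
        have hb : b = 2 * i := by
          obtain ⟨j, hj⟩ | ⟨j, hj⟩ := Nat.even_or_odd b
          · have hj1 : 1 ≤ j := by omega
            have hjn : j ≤ n := by omega
            have h2 := (he1 j hj1 hjn).2
            have : b = 2 * j := by omega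
            rw [← this, heb] at h2
            have hwij : w i = w j := by rw [← hx]; exact congrArg Prod.fst h2
            have : i = j := hw ⟨hi1, hin⟩ ⟨hj1, hjn⟩ hwij
            omega
          · have hj1 : 1 ≤ j + 1 := by omega
            have hjn : j + 1 ≤ n := by omega
            have h2 := (he1 (j + 1) hj1 hjn).1
            have : b = 2 * (j + 1) - 1 := by omega
            rw [← this, heb] at h2
            exact absurd (congrArg Prod.snd h2).symm huv
        -- c > 2n
        have hc2n : 2 * n < c := by
          by_contra h
          push_neg at h
          obtain ⟨l, hl⟩ | ⟨l, hl⟩ := Nat.even_or_odd c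
          · have hl1 : 1 ≤ l := by omega
            have hln : l ≤ n := by omega
            have h2 := (he1 l hl1 hln).2
            have : c = 2 * l := by omega
            rw [← this, hec] at h2
            exact (hwuv l hl1 hln).1 (congrArg Prod.fst h2).symm
          · have hl1 : 1 ≤ l + 1 := by omega
            have hln : l + 1 ≤ n := by omega
            have h2 := (he1 (l + 1) hl1 hln).1
            have : c = 2 * (l + 1) - 1 := by omega
            rw [← this, hec] at h2
            exact (hwuv (l + 1) hl1 hln).1 (congrArg Prod.fst h2).symm
        exact ⟨i, c, ⟨⟨hi1, hin⟩, hc2n, hcm⟩, by rw [hai, hb]⟩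
    · rintro ⟨i, c', ⟨⟨hi1, hin⟩, hc1, hc2⟩, heq⟩
      obtain ⟨h1, h2, h3⟩ : 2 * i - 1 = a ∧ 2 * i = b ∧ c' = c := by
        simpa [Prod.ext_iff] using heq
      refine ⟨by omega, by omega, by omega, by omega, w i, ?_, ?_, ?_⟩
      · rw [← h1]; exact (he1 i hi1 hin).1
      · rw [← h2]; exact (he1 i hi1 hin).2
      · rw [← h3]; exact he2 c' hc1 hc2
  rw [hset, Set.ncard_coe_finset, Finset.card_image_of_injOn, Finset.card_product,
    Nat.card_Icc, Nat.card_Ioc]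
  · simp
  · intro p _ q _ h
    simp only [Prod.mk.injEq] at h
    exact Prod.ext (by omega) h.2.2
end

section
/- Consider functions E : Fin 3 → Fin 3 × Fin 3 with (E k).1 ≠ (E k).2 for all k (a time-ordered sequence of three directed loop-free edges on at most three labeled vertices), under the equivalence E ~ E′ iff there is a permutation π of Fin 3 with E′(k) = (π((E k).1), π((E k).2)) for all k. The number of equivalence classes of such sequences E whose induced undirected graph (on the vertices actually appearing as endpoints) is connected is exactly 36; of these, exactly 4 classes use exactly two distinct vertices and exactly 32 use exactly three distinct vertices. -/
set_option maxRecDepth 100000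
set_option maxHeartbeats 10000000

open SimpleGraph

abbrev mS (E : Fin 3 → Fin 3 × Fin 3) : Set (Fin 3) :=
  {x : Fin 3 | ∃ k, (E k).1 = x ∨ (E k).2 = x}

abbrev mG (E : Fin 3 → Fin 3 × Fin 3) : SimpleGraph (Fin 3) :=
  SimpleGraph.fromRel fun x y => ∃ k, E k = (x, y)

lemma fin3_third : ∀ u v w w' : Fin 3,
    u ≠ v → w ≠ u → w ≠ v → w' ≠ u → w' ≠ v → w = w' := by decide

lemma motif_helper (E : Fin 3 → Fin 3 × Fin 3) (hE : ∀ k, (E k).1 ≠ (E k).2)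
    (x : Fin 3) (hx : x ∈ mS E) :
    ∃ y, ∃ hy : y ∈ mS E, ((mG E).induce (mS E)).Adj ⟨x, hx⟩ ⟨y, hy⟩ := by
  obtain ⟨k, hk⟩ := hx
  rcases hk with h | h
  · refine ⟨(E k).2, ⟨k, Or.inr rfl⟩, ?_⟩
    simp only [comap_adj, Function.Embedding.coe_subtype, fromRel_adj]
    exact ⟨h ▸ hE k, Or.inl ⟨k, by rw [← h]⟩⟩
  · refine ⟨(E k).1, ⟨k, Or.inl rfl⟩, ?_⟩
    simp only [comap_adj, Function.Embedding.coe_subtype, fromRel_adj]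
    exact ⟨fun hh => hE k (hh ▸ h ▸ rfl), Or.inr ⟨k, by rw [← h]⟩⟩

lemma motif_conn (E : Fin 3 → Fin 3 × Fin 3) (hE : ∀ k, (E k).1 ≠ (E k).2) :
    ((mG E).induce (mS E)).Connected := by
  rw [SimpleGraph.connected_iff]
  refine ⟨fun u v => ?_, ⟨⟨(E 0).1, ⟨0, Or.inl rfl⟩⟩⟩⟩
  obtain ⟨u, hu⟩ := u
  obtain ⟨v, hv⟩ := v
  obtain ⟨w, hw, hau⟩ := motif_helper E hE u hu
  obtain ⟨w', hw', hav⟩ := motif_helper E hE v hv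
  by_cases huv : u = v
  · subst huv; rfl
  by_cases hwv : w = v
  · subst hwv; exact hau.reachable
  by_cases hwu : w' = u
  · subst hwu; exact hav.reachable.symm
  · have hwne : w ≠ u := fun h => hau.ne (Subtype.ext h.symm)
    have hwne' : w' ≠ v := fun h => hav.ne (Subtype.ext h.symm)
    have : w = w' := fin3_third u v w w' huv hwne hwv hwu hwne'
    subst this
    exact hau.reachable.trans hav.reachable.symm

lemma motif_ncard (E : Fin 3 → Fin 3 × Fin 3) :
    (mS E).ncard = (Finset.univ.filter fun x => ∃ k, (E k).1 = x ∨ (E k).2 = x).card := by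
  rw [Set.ncard_eq_toFinset_card', Set.toFinset_setOf]

def mrel {P : (Fin 3 → Fin 3 × Fin 3) → Prop}
    (E E' : {E : Fin 3 → Fin 3 × Fin 3 // P E}) : Prop :=
  ∃ π : Equiv.Perm (Fin 3), ∀ k, E'.val k = (π (E.val k).1, π (E.val k).2)

instance {P : (Fin 3 → Fin 3 × Fin 3) → Prop} : DecidableRel (@mrel P) :=
  fun E E' => inferInstanceAs (Decidable (∃ π : Equiv.Perm (Fin 3), ∀ k,
    E'.val k = (π (E.val k).1, π (E.val k).2)))

lemma mrel_equiv {P : (Fin 3 → Fin 3 × Fin 3) → Prop} :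
    Equivalence (@mrel P) := by
  constructor
  · intro E; exact ⟨1, fun k => rfl⟩
  · rintro E E' ⟨π, h⟩
    exact ⟨π⁻¹, fun k => by rw [h k]; simp⟩
  · rintro E E' E'' ⟨π, h⟩ ⟨π', h'⟩
    exact ⟨π' * π, fun k => by rw [h' k, h k]; simp⟩

def quotFintype {α : Type*} [Fintype α] (r : α → α → Prop) [DecidableRel r]
    (h : Equivalence r) : Fintype (Quot r) :=
  @Quotient.fintype α _ ⟨r, h⟩ (fun a b => ‹DecidableRel r› a b)

abbrev Q1 (E : Fin 3 → Fin 3 × Fin 3) : Prop := ∀ k, (E k).1 ≠ (E k).2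
abbrev Q2 (E : Fin 3 → Fin 3 × Fin 3) : Prop := (∀ k, (E k).1 ≠ (E k).2) ∧
  (Finset.univ.filter fun x => ∃ k, (E k).1 = x ∨ (E k).2 = x).card = 2
abbrev Q3 (E : Fin 3 → Fin 3 × Fin 3) : Prop := (∀ k, (E k).1 ≠ (E k).2) ∧
  (Finset.univ.filter fun x => ∃ k, (E k).1 = x ∨ (E k).2 = x).card = 3

lemma cardQ1 : @Fintype.card _ (quotFintype (@mrel Q1) mrel_equiv) = 36 := by decide
lemma cardQ2 : @Fintype.card _ (quotFintype (@mrel Q2) mrel_equiv) = 4 := by decide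
lemma cardQ3 : @Fintype.card _ (quotFintype (@mrel Q3) mrel_equiv) = 32 := by decide

lemma ncardQ1 : Nat.card (Quot (@mrel Q1)) = 36 := by
  rw [@Nat.card_eq_fintype_card _ (quotFintype (@mrel Q1) mrel_equiv)]; exact cardQ1
lemma ncardQ2 : Nat.card (Quot (@mrel Q2)) = 4 := by
  rw [@Nat.card_eq_fintype_card _ (quotFintype (@mrel Q2) mrel_equiv)]; exact cardQ2
lemma ncardQ3 : Nat.card (Quot (@mrel Q3)) = 32 := by
  rw [@Nat.card_eq_fintype_card _ (quotFintype (@mrel Q3) mrel_equiv)]; exact cardQ3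

lemma quot_card_congr {P Q : (Fin 3 → Fin 3 × Fin 3) → Prop} (h : ∀ E, P E ↔ Q E) :
    Nat.card (Quot (fun E E' : {E : Fin 3 → Fin 3 × Fin 3 // P E} =>
      ∃ π : Equiv.Perm (Fin 3), ∀ k, E'.val k = (π (E.val k).1, π (E.val k).2))) =
    Nat.card (Quot (@mrel Q)) :=
  Nat.card_congr (Quot.congr (Equiv.subtypeEquivRight h) (fun a b => Iff.rfl))

/-- There are exactly 36 (2- or 3-node), 3-edge temporal motifs: time-ordered sequences of
three directed loop-free edges on at most three labeled vertices whose induced undirected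
graph on the appearing vertices is connected, counted up to relabeling of the vertices by
a permutation.  Exactly 4 of these classes use exactly two distinct vertices, and exactly
32 use exactly three distinct vertices. -/
theorem three_edge_motifs_card :
    Nat.card (Quot (fun E E' : {E : Fin 3 → Fin 3 × Fin 3 //
        (∀ k, (E k).1 ≠ (E k).2) ∧
        ((SimpleGraph.fromRel fun x y => ∃ k, E k = (x, y)).induce
          {x : Fin 3 | ∃ k, (E k).1 = x ∨ (E k).2 = x}).Connected} =>
      ∃ π : Equiv.Perm (Fin 3), ∀ k, E'.val k = (π (E.val k).1, π (E.val k).2))) = 36 ∧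
    Nat.card (Quot (fun E E' : {E : Fin 3 → Fin 3 × Fin 3 //
        (∀ k, (E k).1 ≠ (E k).2) ∧
        ((SimpleGraph.fromRel fun x y => ∃ k, E k = (x, y)).induce
          {x : Fin 3 | ∃ k, (E k).1 = x ∨ (E k).2 = x}).Connected ∧
        {x : Fin 3 | ∃ k, (E k).1 = x ∨ (E k).2 = x}.ncard = 2} =>
      ∃ π : Equiv.Perm (Fin 3), ∀ k, E'.val k = (π (E.val k).1, π (E.val k).2))) = 4 ∧
    Nat.card (Quot (fun E E' : {E : Fin 3 → Fin 3 × Fin 3 //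
        (∀ k, (E k).1 ≠ (E k).2) ∧
        ((SimpleGraph.fromRel fun x y => ∃ k, E k = (x, y)).induce
          {x : Fin 3 | ∃ k, (E k).1 = x ∨ (E k).2 = x}).Connected ∧
        {x : Fin 3 | ∃ k, (E k).1 = x ∨ (E k).2 = x}.ncard = 3} =>
      ∃ π : Equiv.Perm (Fin 3), ∀ k, E'.val k = (π (E.val k).1, π (E.val k).2))) = 32 := by
  refine ⟨?_, ?_, ?_⟩
  · exact (quot_card_congr (fun E =>
      ⟨And.left, fun h => ⟨h, motif_conn E h⟩⟩)).trans ncardQ1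
  · exact (quot_card_congr (fun E =>
      ⟨fun h => ⟨h.1, by rw [← motif_ncard]; exact h.2.2⟩,
       fun h => ⟨h.1, motif_conn E h.1, by rw [motif_ncard]; exact h.2⟩⟩)).trans ncardQ2
  · exact (quot_card_congr (fun E =>
      ⟨fun h => ⟨h.1, by rw [← motif_ncard]; exact h.2.2⟩,
       fun h => ⟨h.1, motif_conn E h.1, by rw [motif_ncard]; exact h.2⟩⟩)).trans ncardQ3
end
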